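/- arXiv:0704.1969 — 2 statements merged into one kernel-verified Lean document; each statement's English description precedes it below -/
import Mathlib

section
/- For every standard Young-Fibonacci tableau t of size n, the word min(t), obtained by reading the columns of t from right to left and each column from top to bottom, is a permutation of {1,…,n} with P(min(t)) = t, and it is the lexicographically least permutation whose Young-Fibonacci insertion tableau is t. -/
/-!
`min(t)` inserts to `t` because every top entry exceeds all entries to its right: reading
`min(t)` from the right, the bottom entry of a height-2 column finds its own top entry as the
largest unmatched larger letter, and a height-1 entry finds none. For minimality, induct along
the insertion of `w = l x`: if `x` gets matched with `m`, then `m` exceeds every other letter of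
`l`, so moving `m` to the end of `l` makes it lexicographically smaller, while
`min(P(w)) = min(P(l ∖ m)) m x`.
-/

/-- A snakeshape: a composition all of whose parts equal 1 or 2, recorded as the
list of column heights, read left to right. -/
def IsSnakeshape (u : List ℕ) : Prop := ∀ p ∈ u, p = 1 ∨ p = 2

/-- The shape (list of column heights, left to right) of a tableau given as a
list of columns, each column listed top to bottom. -/
def shapeOf (t : List (List ℕ)) : List ℕ := t.map List.length

/-- `t` is a standard Young–Fibonacci tableau of size `n`: columns are listed left
to right, each column top to bottom; every column has height 1 or 2; in each
column the top entry exceeds the bottom entry; every topmost entry exceeds all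
entries in columns strictly to its right; and the entries are exactly `1,…,n`. -/
def IsYFT (n : ℕ) (t : List (List ℕ)) : Prop :=
  (∀ c ∈ t, c.length = 1 ∨ c.length = 2) ∧
  (∀ c ∈ t, List.Chain' (fun a b => b < a) c) ∧
  (∀ i j : ℕ, i < j → j < t.length →
    ∀ a ∈ (t.getD i []).head?, ∀ x ∈ t.getD j [], x < a) ∧
  (t.flatten).Perm (List.range' 1 n)

/-- Auxiliary, fuelled version of the Young–Fibonacci insertion: reading the word
from right to left, each letter read gets matched to the largest not-yet-matched
letter occurring strictly to its left which exceeds it (forming a height-2 column,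
larger letter on top), and otherwise stays single (a height-1 column); columns are
listed in the order in which their status was settled. -/
def insertColsAux : ℕ → List ℕ → List (List ℕ)
  | 0, _ => []
  | _, [] => []
  | fuel+1, w =>
    let x := w.getLast!
    let w' := w.dropLast
    match (w'.filter (fun y => decide (x < y))).max? with
    | none => [x] :: insertColsAux fuel w'
    | some m => [m, x] :: insertColsAux fuel (w'.erase m)

/-- The Young–Fibonacci insertion tableau of a word. -/
def insertCols (w : List ℕ) : List (List ℕ) := insertColsAux w.length w

/-- The word `σ(1)⋯σ(n)` of a permutation of `{1,…,n}` (letters `1,…,n`). -/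
def permWord {n : ℕ} (σ : Equiv.Perm (Fin n)) : List ℕ :=
  List.ofFn (fun i => (σ i : ℕ) + 1)

/-- min(t): read the columns right to left, each column top to bottom. -/
def minWord (t : List (List ℕ)) : List ℕ := t.reverse.flatten

/-- max(t): the top row left to right, then the bottom row right to left. -/
def maxWord (t : List (List ℕ)) : List ℕ :=
  (t.filterMap fun c => if c.length = 2 then c.head? else none) ++
    (t.filterMap List.getLast?).reverse

/-- Number of inversions of a word: pairs of positions `p < q` with `w p > w q`. -/
def invCount (w : List ℕ) : ℕ :=
  ((Finset.range w.length ×ˢ Finset.range w.length).filter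
    (fun p => p.1 < p.2 ∧ w.getD p.2 0 < w.getD p.1 0)).card

/-- `w'` is obtained from `w` by swapping two adjacent letters `x < y` (in this
order in `w`), thus creating exactly one more inversion. -/
def AdjSwap (w w' : List ℕ) : Prop :=
  ∃ l r : List ℕ, ∃ x y : ℕ, x < y ∧ w = l ++ x :: y :: r ∧ w' = l ++ y :: x :: r

/-- The (right) weak order on words. -/
def WordWeakLe (w w' : List ℕ) : Prop := Relation.ReflTransGen AdjSwap w w'

/-- `Shift t t'`: `t'` is obtained from `t` by shifting one entry. Columns are
listed top to bottom, so `[b, a]` is the column with top `b`, bottom `a`. -/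
inductive Shift : List (List ℕ) → List (List ℕ) → Prop
  /-- the bottom entry `a` of a height-2 column bumps up the single entry `c` of
  the column on its left; the top entry `b` falls down. -/
  | bump2 (l r : List (List ℕ)) (c b a : ℕ) :
      Shift (l ++ [[c], [b, a]] ++ r) (l ++ [[c, a], [b]] ++ r)
  /-- the entry `a` of a height-1 column bumps up the single entry `c` of the
  column on its left; its own column disappears. -/
  | bump1 (l r : List (List ℕ)) (c a : ℕ) :
      Shift (l ++ [[c], [a]] ++ r) (l ++ [[c, a]] ++ r)
  /-- `a < c` replaces `c` at the bottom of the height-2 column on its left, and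
  `c < b` takes the former place of `a`. -/
  | exch (l r : List (List ℕ)) (d c b a : ℕ) (h1 : a < c) (h2 : c < b) :
      Shift (l ++ [[d, c], [b, a]] ++ r) (l ++ [[d, a], [b, c]] ++ r)
  /-- `a < c` replaces `c` at the bottom of the height-2 column on its left; since
  `b < c`, `c` becomes a new height-1 column in between and `b` falls down. -/
  | split2 (l r : List (List ℕ)) (d c b a : ℕ) (h1 : a < c) (h2 : b < c) :
      Shift (l ++ [[d, c], [b, a]] ++ r) (l ++ [[d, a], [c], [b]] ++ r)
  /-- `a < c` replaces `c` at the bottom of the height-2 column on its left; `c`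
  becomes a new height-1 column and the height-1 column of `a` disappears. -/
  | split1 (l r : List (List ℕ)) (d c a : ℕ) (h1 : a < c) :
      Shift (l ++ [[d, c], [a]] ++ r) (l ++ [[d, a], [c]] ++ r)

/-- The bottom row of a tableau, read left to right: the bottom entries of the
height-2 columns together with the entries of the height-1 columns. -/
def bottomRow (t : List (List ℕ)) : List ℕ := t.filterMap List.getLast?

/-- Generating relations of the canonical poset `P_t`: `canoGen t x y` means `x`
is covered... i.e. `x <_P y` is a generating relation: consecutive bottom-row
entries read right to left (rightmost lowest), and each top entry of a height-2
column below the corresponding bottom entry. -/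
def canoGen (t : List (List ℕ)) (x y : ℕ) : Prop :=
  (∃ i : ℕ, i + 1 < (bottomRow t).length ∧
    (bottomRow t).getD (i + 1) 0 = x ∧ (bottomRow t).getD i 0 = y) ∨
  (∃ c ∈ t, c.length = 2 ∧ c.head? = some x ∧ c.getLast? = some y)

/-- `w` is (the word of) a linear extension of the canonical poset `P_t`. -/
def IsLinExt (t : List (List ℕ)) (w : List ℕ) : Prop :=
  ∀ x y : ℕ, Relation.ReflTransGen (canoGen t) x y → x ≠ y →
    w.idxOf x < w.idxOf y

/-- The set of inversions of a word: pairs `(j, i)` with `i < j` such that `j`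
occurs before `i`. -/
def InvSet (w : List ℕ) : Set (ℕ × ℕ) :=
  {p | p.2 < p.1 ∧ p.1 ∈ w ∧ p.2 ∈ w ∧ w.idxOf p.1 < w.idxOf p.2}

/-- The set of non-inversions of a word: pairs `(i, j)` with `i < j` such that `i`
occurs before `j`. -/
def NonInvSet (w : List ℕ) : Set (ℕ × ℕ) :=
  {p | p.1 < p.2 ∧ p.1 ∈ w ∧ p.2 ∈ w ∧ w.idxOf p.1 < w.idxOf p.2}

/-- The row canonical tableau of shape `u` (size `n`): topmost cells are labelled
`n, n-1, …` from left to right, bottom cells of height-2 columns are labelled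
`1, 2, …` from left to right. -/
def rTcols (n : ℕ) (u : List ℕ) : List (List ℕ) :=
  (List.range u.length).map (fun i =>
    if u.getD i 0 = 2 then [n - i, (u.take i).count 2 + 1] else [n - i])

/-- The column canonical tableau of shape `u`: cells are labelled `1, 2, …` taking
columns right to left, in each column the bottom cell before the top cell. -/
def cTcols (u : List ℕ) : List (List ℕ) :=
  (List.range u.length).map (fun i =>
    let s := u.sum - (u.take (i + 1)).sum
    if u.getD i 0 = 2 then [s + 2, s + 1] else [s + 1])

/-- `t` is a semistandard Young–Fibonacci tableau of shape `u`: entries are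
positive integers, in each column the top entry strictly exceeds the bottom one,
and every topmost entry is `≥` all entries in columns strictly to its right. -/
def IsSSYFT (u : List ℕ) (t : List (List ℕ)) : Prop :=
  shapeOf t = u ∧
  (∀ c ∈ t, List.Chain' (fun a b => b < a) c) ∧
  (∀ i j : ℕ, i < j → j < t.length →
    ∀ a ∈ (t.getD i []).head?, ∀ x ∈ t.getD j [], x ≤ a) ∧
  (∀ x ∈ t.flatten, 1 ≤ x)

/-- `t` has content `v`: for each `i`, `t` has exactly `v_i` entries equal to `i`.-/
def ContentIs (v : List ℕ) (t : List (List ℕ)) : Prop :=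
  ∀ i : ℕ, t.flatten.count (i + 1) = v.getD i 0

/-- The Young–Fibonacci number `N_{u,v}`: the number of semistandard
Young–Fibonacci tableaux of shape `u` and content `v`. -/
noncomputable def YFNumber (u v : List ℕ) : ℕ :=
  Nat.card {t : List (List ℕ) // IsSSYFT u t ∧ ContentIs v t}

/-- The multiset (as a list indexed by positions) `v^{1-}`: delete a part equal
to 1, or decrease a larger part by 1. -/
def vMinus (v : List ℕ) : List (List ℕ) :=
  (List.range v.length).map (fun p =>
    if v.getD p 0 = 1 then v.eraseIdx p else v.set p (v.getD p 0 - 1))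

/-- The list of snakeshapes covering `u` in the Young–Fibonacci lattice:
(i) prepend a part 1; (ii) replace the leftmost part equal to 1 by a 2;
(iii) if `u` starts with `k ≥ 1` parts equal to 2, insert a part 1 just after the
`i`-th part, `1 ≤ i ≤ k`. -/
def coversList (u : List ℕ) : List (List ℕ) :=
  [1 :: u] ++
    (if (u.takeWhile (fun p => decide (p = 2))).length < u.length then
      [u.take (u.takeWhile (fun p => decide (p = 2))).length ++
        2 :: u.drop ((u.takeWhile (fun p => decide (p = 2))).length + 1)]
    else []) ++
    ((List.range (u.takeWhile (fun p => decide (p = 2))).length).map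
      (fun i => u.insertIdx (i + 1) 1))

/-- Okada's analogue of the Kostka numbers (fuelled implementation of the
defining recurrences; `v.length` is enough fuel). -/
def OkadaKAux : ℕ → List ℕ → List ℕ → ℕ
  | _, [], [] => 1
  | fuel+1, 1 :: u, 1 :: v => OkadaKAux fuel u v
  | fuel+1, 2 :: u, 2 :: v => OkadaKAux fuel u v
  | _+1, 1 :: _, 2 :: _ => 0
  | fuel+1, 2 :: u, 1 :: v => ((coversList u).map (fun w => OkadaKAux fuel w v)).sum
  | _, _, _ => 0

/-- Okada's analogue `K_{u,v}` of the Kostka numbers, determined by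
`K_{∅,∅} = 1`, `K_{1u,1v} = K_{u,v}`, `K_{2u,2v} = K_{u,v}`, `K_{1u,2v} = 0` and
`K_{2u,1v} = Σ_{w covers u} K_{w,v}`. -/
def OkadaK (u v : List ℕ) : ℕ := OkadaKAux v.length u v

/-- The cells of a snakeshape `u`: pairs `(i, r)` with `i` the (0-based) column
index and `r = 0` for the bottom cell, `r = 1` for the top cell. -/
def cellsFinset (u : List ℕ) : Finset (ℕ × ℕ) :=
  (Finset.range u.length ×ˢ Finset.range 2).filter (fun p => p.2 < u.getD p.1 0)

/-- Generating relations of the poset `P_u` on the cells of `u`: the bottom-row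
cells read right to left form a chain (rightmost lowest), and the top cell of
each height-2 column lies strictly below its bottom cell. -/
def cellGen (u : List ℕ) (c c' : ℕ × ℕ) : Prop :=
  (∃ i : ℕ, i + 1 < u.length ∧ c = (i + 1, 0) ∧ c' = (i, 0)) ∨
  (∃ i : ℕ, i < u.length ∧ u.getD i 0 = 2 ∧ c = (i, 1) ∧ c' = (i, 0))

/-- The order relation of the poset `P_u`. -/
def cellLe (u : List ℕ) (c c' : ℕ × ℕ) : Prop :=
  Relation.ReflTransGen (cellGen u) c c'

namespace List

variable {α : Type*} [LinearOrder α]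

theorem append_lt_append_of_length_eq {a b : List α} (h : a < b) (hl : a.length = b.length)
    (s s' : List α) : a ++ s < b ++ s' := by
  induction h with
  | nil => simp at hl
  | cons _ ih => exact Lex.cons (ih (by simpa using hl))
  | rel hxy => exact Lex.rel hxy

theorem append_le_append_of_length_eq {a b : List α} (h : a ≤ b) (hl : a.length = b.length)
    (s : List α) : a ++ s ≤ b ++ s := by
  rcases h.lt_or_eq with h | rfl
  · exact (append_lt_append_of_length_eq h hl s s).le
  · rfl

theorem erase_append_singleton_le {l : List α} {m : α} (hm : m ∈ l)
    (hmax : ∀ y ∈ l.erase m, y < m) : l.erase m ++ [m] ≤ l := by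
  obtain ⟨p, q, -, rfl, he⟩ := exists_erase_eq hm
  rw [he] at hmax ⊢
  rcases q with _ | ⟨y, q⟩
  · simp
  · have hy : y < m := hmax y (by simp)
    simpa using (append_left_lt (l₁ := p) (Lex.rel hy : y :: (q ++ [m]) < m :: y :: q)).le

end List

theorem max?_filter_gt_eq_some_iff {l : List ℕ} {x m : ℕ} :
    (l.filter (fun y => decide (x < y))).max? = some m ↔
      m ∈ l ∧ x < m ∧ ∀ y ∈ l, x < y → y ≤ m := by
  simp only [List.max?_eq_some_iff, List.mem_filter, decide_eq_true_eq, and_imp]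
  tauto

theorem insertColsAux_concat (f : ℕ) (l : List ℕ) (x : ℕ) :
    insertColsAux (f + 1) (l ++ [x]) =
      match (l.filter (fun y => decide (x < y))).max? with
      | none => [x] :: insertColsAux f l
      | some m => [m, x] :: insertColsAux f (l.erase m) := by
  rw [insertColsAux.eq_3 _ _ (by simp)]
  simp only [List.getLast!_eq_getLast?_getD, List.getLast?_concat, Option.getD_some,
    List.dropLast_concat]

theorem insertColsAux_eq_of_length_le (f g : ℕ) (w : List ℕ) (hf : w.length ≤ f)
    (hg : w.length ≤ g) : insertColsAux f w = insertColsAux g w := by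
  induction f generalizing g w with
  | zero =>
    rw [List.length_eq_zero_iff.mp (Nat.le_zero.mp hf)]
    cases g <;> rfl
  | succ f ih =>
    rcases w.eq_nil_or_concat' with rfl | ⟨l, x, rfl⟩
    · cases g <;> rfl
    obtain ⟨g, rfl⟩ : ∃ g', g = g' + 1 := ⟨g - 1, by simp at hg; omega⟩
    simp only [List.length_append, List.length_singleton, Nat.add_le_add_iff_right] at hf hg
    rw [insertColsAux_concat, insertColsAux_concat]
    split
    · rw [ih g l hf hg]
    · rw [ih g _ (List.length_erase_le.trans hf) (List.length_erase_le.trans hg)]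

theorem insertCols_concat_of_max?_eq_none {l : List ℕ} {x : ℕ}
    (h : (l.filter (fun y => decide (x < y))).max? = none) :
    insertCols (l ++ [x]) = [x] :: insertCols l := by
  rw [insertCols, List.length_append, List.length_singleton, insertColsAux_concat, h]
  rfl

theorem insertCols_concat_of_max?_eq_some {l : List ℕ} {x m : ℕ}
    (h : (l.filter (fun y => decide (x < y))).max? = some m) :
    insertCols (l ++ [x]) = [m, x] :: insertCols (l.erase m) := by
  rw [insertCols, List.length_append, List.length_singleton, insertColsAux_concat, h, insertCols,
    insertColsAux_eq_of_length_le _ _ _ le_rfl List.length_erase_le]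

theorem insertCols_induction {P : List ℕ → Prop} (nil : P [])
    (single : ∀ l x, (l.filter (fun y => decide (x < y))).max? = none → P l → P (l ++ [x]))
    (pair : ∀ l x m, (l.filter (fun y => decide (x < y))).max? = some m → P (l.erase m) →
      P (l ++ [x]))
    (w : List ℕ) : P w := by
  induction hn : w.length using Nat.strong_induction_on generalizing w with
  | _ n ih =>
    rcases w.eq_nil_or_concat' with rfl | ⟨l, x, rfl⟩
    · exact nil
    have hl : l.length < n := by simp [← hn]
    cases h : (l.filter (fun y => decide (x < y))).max? with
    | none => exact single l x h (ih _ hl l rfl)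
    | some m => exact pair l x m h (ih _ (List.length_erase_le.trans_lt hl) _ rfl)

open List in
theorem flatten_insertCols_perm (w : List ℕ) : (insertCols w).flatten.Perm w := by
  induction w using insertCols_induction with
  | nil => rfl
  | single l x h ih =>
    rw [insertCols_concat_of_max?_eq_none h]
    exact (ih.cons x).trans (List.perm_append_singleton x l).symm
  | pair l x m h ih =>
    have hm : m ∈ l := (max?_filter_gt_eq_some_iff.mp h).1
    rw [insertCols_concat_of_max?_eq_some h]
    calc ([m, x] :: insertCols (l.erase m)).flatten
        _ = m :: x :: (insertCols (l.erase m)).flatten := rfl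
        _ ~ m :: x :: l.erase m := (ih.cons x).cons m
        _ ~ x :: m :: l.erase m := .swap _ _ _
        _ ~ x :: l := ((List.perm_cons_erase hm).symm).cons x
        _ ~ l ++ [x] := (List.perm_append_singleton x l).symm

@[simp]
theorem minWord_cons (c : List ℕ) (t : List (List ℕ)) :
    minWord (c :: t) = minWord t ++ c := by
  simp [minWord]

theorem minWord_perm_flatten (t : List (List ℕ)) : (minWord t).Perm t.flatten :=
  (List.reverse_perm t).flatten

theorem minWord_insertCols_perm (w : List ℕ) : (minWord (insertCols w)).Perm w :=
  (minWord_perm_flatten _).trans (flatten_insertCols_perm w)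

theorem minWord_insertCols_le {w : List ℕ} (hw : w.Nodup) : minWord (insertCols w) ≤ w := by
  induction w using insertCols_induction with
  | nil => rfl
  | single l x h ih =>
    rw [insertCols_concat_of_max?_eq_none h, minWord_cons]
    exact List.append_le_append_of_length_eq (ih (hw.sublist (List.sublist_append_left _ _)))
      (minWord_insertCols_perm l).length_eq _
  | pair l x m h ih =>
    obtain ⟨hml, hxm, hle⟩ := max?_filter_gt_eq_some_iff.mp h
    have hl : l.Nodup := hw.sublist (List.sublist_append_left _ _)
    have hmax : ∀ y ∈ l.erase m, y < m := by
      intro y hy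
      obtain ⟨hym, hyl⟩ := (hl.mem_erase_iff).mp hy
      rcases lt_or_ge x y with hxy | hyx
      · exact (hle y hyl hxy).lt_of_ne hym
      · exact hyx.trans_lt hxm
    have hlen : (minWord (insertCols (l.erase m)) ++ [m]).length = l.length := by
      simp [(minWord_insertCols_perm _).length_eq, List.length_erase_of_mem hml,
        Nat.sub_add_cancel (List.length_pos_of_mem hml)]
    rw [insertCols_concat_of_max?_eq_some h, minWord_cons, ← List.singleton_append,
      ← List.append_assoc]
    refine List.append_le_append_of_length_eq ?_ hlen _
    calc minWord (insertCols (l.erase m)) ++ [m]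
        _ ≤ l.erase m ++ [m] := List.append_le_append_of_length_eq (ih (hl.erase m))
            (minWord_insertCols_perm _).length_eq _
        _ ≤ l := List.erase_append_singleton_le hml hmax

theorem insertCols_minWord {t : List (List ℕ)} (hlen : ∀ c ∈ t, c.length = 1 ∨ c.length = 2)
    (hdec : ∀ c ∈ t, c.IsChain (fun a b => b < a))
    (htop : t.Pairwise (fun c d => ∀ a ∈ c.head?, ∀ x ∈ d, x < a)) :
    insertCols (minWord t) = t := by
  induction t with
  | nil => rfl
  | cons c t ih =>
    simp only [List.mem_cons, forall_eq_or_imp] at hlen hdec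
    rw [List.pairwise_cons] at htop
    have ht : insertCols (minWord t) = t := ih hlen.2 hdec.2 htop.2
    have hbelow : ∀ a ∈ c.head?, ∀ y ∈ minWord t, y < a := fun a ha y hy => by
      obtain ⟨d, hd, hyd⟩ := List.mem_flatten.mp ((minWord_perm_flatten t).subset hy)
      exact htop.1 d hd a ha y hyd
    rcases c with _ | ⟨b, _ | ⟨a, _ | ⟨_, _⟩⟩⟩ <;> simp at hlen
    · have hnone : ((minWord t).filter (fun y => decide (b < y))).max? = none := by
        simpa [List.max?_eq_none_iff, List.filter_eq_nil_iff] using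
          fun y hy => (hbelow b rfl y hy).le
      rw [minWord_cons, insertCols_concat_of_max?_eq_none hnone, ht]
    · have hab : a < b := by simpa using hdec.1
      have hsome : ((minWord t ++ [b]).filter (fun y => decide (a < y))).max? = some b := by
        refine max?_filter_gt_eq_some_iff.mpr ⟨by simp, hab, fun y hy _ => ?_⟩
        rcases List.mem_append.mp hy with hy | hy
        · exact (hbelow b rfl y hy).le
        · simp_all
      have herase : (minWord t ++ [b]).erase b = minWord t := by
        rw [List.erase_append_right _ fun hb => (hbelow b rfl b hb).false, List.erase_cons_head,
          List.append_nil]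
      rw [minWord_cons, show minWord t ++ [b, a] = minWord t ++ [b] ++ [a] by simp,
        insertCols_concat_of_max?_eq_some hsome, herase, ht]

theorem IsYFT.pairwise_head_gt {n : ℕ} {t : List (List ℕ)} (ht : IsYFT n t) :
    t.Pairwise (fun c d => ∀ a ∈ c.head?, ∀ x ∈ d, x < a) := by
  rw [List.pairwise_iff_getElem]
  intro i j hi hj hij
  simpa [List.getD_eq_getElem, hi, hj] using ht.2.2.1 i j hij hj

/-- `min(t)` (columns right to left, each top to bottom) is a
permutation of `{1,…,n}`, its insertion tableau is `t`, and it is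
lexicographically least among the permutations inserting to `t`. -/
theorem minWord_is_lex_least_in_class (n : ℕ) (t : List (List ℕ))
    (ht : IsYFT n t) :
    (minWord t).Perm (List.range' 1 n) ∧
    insertCols (minWord t) = t ∧
    ∀ w : List ℕ, w.Perm (List.range' 1 n) → insertCols w = t →
      w = minWord t ∨ List.Lex (· < ·) (minWord t) w := by
  refine ⟨(minWord_perm_flatten t).trans ht.2.2.2,
    insertCols_minWord ht.1 ht.2.1 ht.pairwise_head_gt, fun w hw hwt => ?_⟩
  have hle : minWord t ≤ w := hwt ▸ minWord_insertCols_le (hw.nodup_iff.mpr List.nodup_range')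
  exact hle.eq_or_lt.imp Eq.symm id
end

section
/- Let u and v be snakeshapes of size n ≥ 2. Then N_{u,v} = 0 if and only if u = (1,1,…,1,2), consisting of n−2 parts equal to 1 followed by a final part equal to 2, and the first part of v equals 2. -/
/-! Write the content `v` as a weakly decreasing word `w` of length `n`. Fill the tops of the
columns of `u`, left to right, with the first `ℓ(u)` letters of `w`, and the bottoms of the
height-2 columns, left to right, with the remaining ones. Every top then dominates everything to
its right. The two entries of a column sit at distance at least two in `w`, and no letter occurs
three times in `w`, so the column is strict; the only exception is the last column of
`(1,…,1,2)`, which receives the two smallest letters, and these differ unless `v₁ = 2`.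
Conversely, in a tableau of shape `(1,…,1,2)` the last column holds at most one `1` and has top
`≥ 2`, so a second `1` would be a height-1 column failing to dominate that top. -/

open List

theorem IsSnakeshape.sum_eq {u : List ℕ} (hu : IsSnakeshape u) :
    u.sum = u.length + u.count 2 := by
  induction u with
  | nil => rfl
  | cons p u ih =>
    rw [IsSnakeshape, forall_mem_cons] at hu
    rcases hu with ⟨rfl | rfl, hu⟩ <;> simp [ih hu] <;> omega

theorem getElem_lt_getElem_of_count_le_two {α : Type*} [LinearOrder α] {w : List α}
    (hw : w.Pairwise (· ≥ ·)) (hc : ∀ x, w.count x ≤ 2) {a b : ℕ} (hab : a + 2 ≤ b)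
    (hb : b < w.length) : w[b] < w[a] := by
  have hle := List.pairwise_iff_getElem.1 hw
  by_contra! h
  have h₁ : w[a + 1] = w[a] :=
    le_antisymm (hle _ _ _ _ (by omega)) (h.trans (hle _ _ _ _ (by omega)))
  have h₂ : w[b] = w[a] := le_antisymm (hle _ _ _ _ (by omega)) h
  have hmem : w[a] ∈ w.drop (a + 1 + 1) := by
    rw [← h₂, mem_iff_getElem]
    exact ⟨b - (a + 2), by simp; omega, by simp; congr 1; omega⟩
  have : 3 ≤ (w.drop a).count w[a] := by
    rw [drop_eq_getElem_cons (by omega), drop_eq_getElem_cons (by omega), h₁]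
    simpa using hmem
  exact absurd ((drop_sublist a w).count_le w[a]) (by have := hc w[a]; omega)

/-- The weakly decreasing word with `v.getD i 0` letters `i + 1` for each `i`. -/
def contentWord : List ℕ → List ℕ
  | [] => []
  | m :: v => (contentWord v).map (· + 1) ++ replicate m 1

theorem length_contentWord (v : List ℕ) : (contentWord v).length = v.sum := by
  induction v with
  | nil => rfl
  | cons m v ih => simp [contentWord, ih, add_comm]

theorem one_le_of_mem_contentWord {v : List ℕ} {x : ℕ} (hx : x ∈ contentWord v) : 1 ≤ x := by
  induction v with
  | nil => simp [contentWord] at hx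
  | cons m v ih =>
    simp only [contentWord, mem_append, mem_map, mem_replicate] at hx
    omega

theorem count_zero_contentWord (v : List ℕ) : (contentWord v).count 0 = 0 :=
  count_eq_zero.2 fun h => absurd (one_le_of_mem_contentWord h) (by omega)

theorem count_succ_contentWord (v : List ℕ) (i : ℕ) :
    (contentWord v).count (i + 1) = v.getD i 0 := by
  induction v generalizing i with
  | nil => simp [contentWord]
  | cons m v ih =>
    rw [contentWord, count_append, count_map_of_injective _ _ (add_left_injective 1),
      count_replicate]
    cases i with
    | zero => simp [count_zero_contentWord]
    | succ i => simp [ih]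

theorem pairwise_contentWord (v : List ℕ) : (contentWord v).Pairwise (· ≥ ·) := by
  induction v with
  | nil => simp [contentWord]
  | cons m v ih =>
    refine pairwise_append.2 ⟨pairwise_map.2 (ih.imp fun h => by omega),
      pairwise_replicate.2 (.inr le_rfl), ?_⟩
    simp only [mem_map, mem_replicate]
    rintro _ ⟨x, hx, rfl⟩ _ ⟨-, rfl⟩
    exact Nat.le_add_left 1 x

theorem perm_contentWord_iff {v l : List ℕ} (hl : ∀ x ∈ l, 1 ≤ x) :
    l ~ contentWord v ↔ ∀ i, l.count (i + 1) = v.getD i 0 := by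
  simp only [perm_iff_count, ← count_succ_contentWord]
  refine ⟨fun h i => h _, fun h x => ?_⟩
  cases x with
  | zero =>
    rw [count_eq_zero.2 fun h => absurd (hl 0 h) (by omega), count_zero_contentWord]
  | succ i => exact h i

theorem count_contentWord_le_two {v : List ℕ} (hv : IsSnakeshape v) (x : ℕ) :
    (contentWord v).count x ≤ 2 := by
  cases x with
  | zero => simp [count_zero_contentWord]
  | succ i =>
    rw [count_succ_contentWord, getD_eq_getElem?_getD]
    cases h : v[i]? with
    | none => simp
    | some p => rcases hv p (mem_of_getElem? h) with rfl | rfl <;> simp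

def TopDominates (t : List (List ℕ)) : Prop :=
  ∀ i j : ℕ, i < j → j < t.length → ∀ a ∈ (t.getD i []).head?, ∀ x ∈ t.getD j [], x ≤ a

theorem topDominates_cons_iff {c : List ℕ} {t : List (List ℕ)} :
    TopDominates (c :: t) ↔ (∀ a ∈ c.head?, ∀ x ∈ t.flatten, x ≤ a) ∧ TopDominates t := by
  constructor
  · intro h
    refine ⟨fun a ha x hx => ?_, fun i j hij hj => h (i + 1) (j + 1) (by omega) (by simpa)⟩
    obtain ⟨col, hcol, hx⟩ := mem_flatten.1 hx
    obtain ⟨j, hj, rfl⟩ := getElem_of_mem hcol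
    exact h 0 (j + 1) (by omega) (by simpa) a ha x (by simpa [getD_eq_getElem?_getD, hj])
  · rintro ⟨hc, ht⟩ (_ | i) (_ | j) hij hj a ha x hx
    · omega
    · simp only [getD_cons_zero] at ha
      simp only [getD_cons_succ] at hx
      refine hc a ha x (mem_flatten.2 ⟨_, ?_, hx⟩)
      simp [getD_eq_getElem?_getD, show j < t.length by simpa using hj]
    · omega
    · exact ht i j (by omega) (by simpa using hj) a ha x hx

theorem isSSYFT_cons_iff {p : ℕ} {u c : List ℕ} {t : List (List ℕ)} :
    IsSSYFT (p :: u) (c :: t) ↔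
      c.length = p ∧ c.IsChain (fun a b => b < a) ∧ (∀ a ∈ c.head?, ∀ x ∈ t.flatten, x ≤ a) ∧
        (∀ x ∈ c, 1 ≤ x) ∧ IsSSYFT u t := by
  change _ ∧ _ ∧ TopDominates _ ∧ _ ↔ _ ∧ _ ∧ _ ∧ _ ∧ _ ∧ _ ∧ TopDominates _ ∧ _
  simp only [shapeOf, map_cons, cons.injEq, forall_mem_cons, topDominates_cons_iff,
    flatten_cons, forall_mem_append]
  tauto

theorem ne_nil_of_isSSYFT_cons {p : ℕ} {u : List ℕ} {t : List (List ℕ)}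
    (ht : IsSSYFT (p :: u) t) : t ≠ [] := by
  rintro rfl
  exact absurd ht.1 (by simp [shapeOf])

theorem exists_of_isSSYFT_singleton_two {t : List (List ℕ)} (ht : IsSSYFT [2] t) :
    ∃ a b, t = [[a, b]] ∧ 1 ≤ b ∧ b < a := by
  obtain ⟨c, t', rfl⟩ := exists_cons_of_ne_nil (ne_nil_of_isSSYFT_cons ht)
  obtain ⟨hlen, hchain, -, hpos, ht'⟩ := isSSYFT_cons_iff.1 ht
  obtain ⟨a, b, rfl⟩ := length_eq_two.1 hlen
  obtain rfl : t' = [] := map_eq_nil_iff.1 ht'.1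
  exact ⟨a, b, rfl, hpos b (by simp), (isChain_cons_cons.1 hchain).1⟩

theorem exists_two_le_of_isSSYFT_append_two {u : List ℕ} {t : List (List ℕ)}
    (ht : IsSSYFT (u ++ [2]) t) : ∃ y ∈ t.flatten, 2 ≤ y := by
  induction u generalizing t with
  | nil =>
    obtain ⟨a, b, rfl, hb, hba⟩ := exists_of_isSSYFT_singleton_two ht
    exact ⟨a, by simp, by omega⟩
  | cons p u ih =>
    obtain ⟨c, t', rfl⟩ := exists_cons_of_ne_nil (ne_nil_of_isSSYFT_cons ht)
    obtain ⟨y, hy, hy2⟩ := ih (isSSYFT_cons_iff.1 ht).2.2.2.2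
    exact ⟨y, by simp [hy], hy2⟩

theorem count_one_le_one_of_isSSYFT_replicate_append_two {k : ℕ} {t : List (List ℕ)}
    (ht : IsSSYFT (replicate k 1 ++ [2]) t) : t.flatten.count 1 ≤ 1 := by
  induction k generalizing t with
  | zero =>
    obtain ⟨a, b, rfl, hb, hba⟩ := exists_of_isSSYFT_singleton_two ht
    rw [flatten_singleton, count_cons_of_ne (by omega)]
    exact count_le_length
  | succ k ih =>
    rw [replicate_succ, cons_append] at ht
    obtain ⟨c, t', rfl⟩ := exists_cons_of_ne_nil (ne_nil_of_isSSYFT_cons ht)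
    obtain ⟨hlen, -, hdom, -, ht'⟩ := isSSYFT_cons_iff.1 ht
    obtain ⟨x, rfl⟩ := length_eq_one_iff.1 hlen
    obtain ⟨y, hy, hy2⟩ := exists_two_le_of_isSSYFT_append_two ht'
    have hx : 2 ≤ x := hy2.trans (hdom x rfl y hy)
    simpa [count_cons, show x ≠ 1 by omega] using ih ht'

def fillCols : List ℕ → List ℕ → List ℕ → List (List ℕ)
  | 1 :: u, x :: T, B => [x] :: fillCols u T B
  | 2 :: u, x :: T, y :: B => [x, y] :: fillCols u T B
  | _, _, _ => []

section fillCols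

variable {u T B : List ℕ}

theorem perm_flatten_fillCols (hu : IsSnakeshape u) (hT : T.length = u.length)
    (hB : B.length = u.count 2) : (fillCols u T B).flatten ~ T ++ B := by
  induction u generalizing T B with
  | nil => simp_all [fillCols]
  | cons p u ih =>
    rw [IsSnakeshape, forall_mem_cons] at hu
    obtain ⟨x, T, rfl⟩ := exists_cons_of_length_eq_add_one hT
    rcases hu with ⟨rfl | rfl, hu⟩
    · exact (ih hu (by simpa using hT) (by simpa using hB)).cons x
    · obtain ⟨y, B, rfl⟩ := exists_cons_of_length_eq_add_one (by simpa using hB)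
      exact (((ih hu (by simpa using hT) (by simpa using hB)).cons y).trans
        perm_middle.symm).cons x

theorem isSSYFT_fillCols (hu : IsSnakeshape u) (hT : T.length = u.length)
    (hB : B.length = u.count 2) (hw : (T ++ B).Pairwise (· ≥ ·)) (hpos : ∀ x ∈ T ++ B, 1 ≤ x)
    -- every pair that can form a column: at distance at least two in `T ++ B`, or the last
    -- column of `(1,…,1,2)`
    (hstrict : ∀ i k (hi : i < T.length) (hk : k < B.length),
      (i + 1 < T.length ∨ 0 < k ∨ u = replicate i 1 ++ [2]) → B[k] < T[i]) :
    IsSSYFT u (fillCols u T B) := by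
  induction u generalizing T B with
  | nil =>
    obtain rfl := length_eq_zero_iff.1 hT
    simp [fillCols, IsSSYFT, shapeOf]
  | cons p u ih =>
    rw [IsSnakeshape, forall_mem_cons] at hu
    obtain ⟨x, T, rfl⟩ := exists_cons_of_length_eq_add_one hT
    have hx : ∀ z ∈ T ++ B, z ≤ x := (pairwise_cons.1 hw).1
    rcases hu with ⟨rfl | rfl, hu⟩
    · have hperm := perm_flatten_fillCols hu (T := T) (B := B) (by simpa using hT)
        (by simpa using hB)
      refine isSSYFT_cons_iff.2 ⟨rfl, isChain_singleton x, ?_, by simpa using hpos x (by simp),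
        ih hu (by simpa using hT) (by simpa using hB) (pairwise_cons.1 hw).2
          (fun z hz => hpos z (mem_cons_of_mem x hz)) fun i k hi hk hik => ?_⟩
      · rintro _ ⟨⟩ z hz
        exact hx z (hperm.subset hz)
      · refine hstrict (i + 1) k (by simpa using hi) hk ?_
        rcases hik with h | h | rfl
        exacts [.inl (by simpa using h), .inr (.inl h), .inr (.inr rfl)]
    · obtain ⟨y, B, rfl⟩ := exists_cons_of_length_eq_add_one (by simpa using hB)
      have hperm := perm_flatten_fillCols hu (T := T) (B := B) (by simpa using hT)
        (by simpa using hB)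
      have hsub : T ++ B <+ T ++ y :: B := (Sublist.refl T).append (sublist_cons_self y B)
      refine isSSYFT_cons_iff.2 ⟨rfl, ?_, ?_, ?_, ih hu (by simpa using hT) (by simpa using hB)
          ((pairwise_cons.1 hw).2.sublist hsub) (fun z hz => hpos z (mem_cons_of_mem x
          (hsub.subset hz))) fun i k hi hk hik => ?_⟩
      · refine isChain_pair.2 (hstrict 0 0 (by simp) (by simp) ?_)
        cases T with
        | nil => simp_all
        | cons => simp
      · rintro _ ⟨⟩ z hz
        exact hx z (hsub.subset (hperm.subset hz))
      · simpa [forall_and] using ⟨hpos x (by simp), hpos y (by simp)⟩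
      · exact hstrict (i + 1) (k + 1) (by simpa using hi) (by simpa using hk) (.inr (.inl k.succ_pos))

end fillCols

theorem getElem_contentWord_lt_of_head?_eq_one {v : List ℕ} (hv : v.head? = some 1) {i : ℕ}
    (hi : i + 1 < (contentWord v).length) :
    (contentWord v)[(contentWord v).length - 1] < (contentWord v)[i] := by
  obtain ⟨v, rfl⟩ : ∃ v', v = 1 :: v' := by cases v <;> simp_all
  have hi' : i < (contentWord v).length := by simpa [contentWord] using hi
  have := one_le_of_mem_contentWord (getElem_mem hi')
  simp [contentWord, getElem_append_left, hi']
  omega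

theorem List.splitLengths_map_length_flatten {α : Type*} (t : List (List α)) :
    (t.map length).splitLengths t.flatten = t := by
  induction t with
  | nil => rfl
  | cons c t ih => simp [splitLengths_cons, ih]

theorem finite_setOf_isSSYFT_contentIs (u v : List ℕ) :
    {t | IsSSYFT u t ∧ ContentIs v t}.Finite := by
  refine (List.finite_toSet ((contentWord v).permutations.map u.splitLengths)).subset ?_
  rintro t ⟨ht, hc⟩
  refine mem_map.2 ⟨t.flatten, mem_permutations.2 ((perm_contentWord_iff ht.2.2.2).2 hc), ?_⟩
  rw [← ht.1]
  exact splitLengths_map_length_flatten t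

theorem yfNumber_eq_zero_iff_not_exists (u v : List ℕ) :
    YFNumber u v = 0 ↔ ¬∃ t, IsSSYFT u t ∧ ContentIs v t := by
  have : Finite {t // IsSSYFT u t ∧ ContentIs v t} :=
    (finite_setOf_isSSYFT_contentIs u v).to_subtype
  rw [YFNumber, Nat.card_eq_zero, or_iff_left (not_infinite_iff_finite.2 this), isEmpty_subtype,
    not_exists]

theorem exists_isSSYFT_contentIs {u v : List ℕ} (hu : IsSnakeshape u) (hv : IsSnakeshape v)
    (hsum : u.sum = v.sum) (hexc : ∀ k, u = replicate k 1 ++ [2] → v.head? ≠ some 2) :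
    ∃ t, IsSSYFT u t ∧ ContentIs v t := by
  have hw : (contentWord v).length = u.length + u.count 2 := by
    rw [length_contentWord, ← hsum, hu.sum_eq]
  have hT : ((contentWord v).take u.length).length = u.length := by simp; omega
  have hB : ((contentWord v).drop u.length).length = u.count 2 := by simp; omega
  have hperm := (perm_flatten_fillCols hu hT hB).trans (by rw [take_append_drop])
  refine ⟨_, isSSYFT_fillCols hu hT hB (by rw [take_append_drop]; exact pairwise_contentWord v)
    (by rw [take_append_drop]; exact fun x => one_le_of_mem_contentWord) ?_,
    (perm_contentWord_iff fun x hx => one_le_of_mem_contentWord (hperm.subset hx)).1 hperm⟩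
  intro i k hi hk hcase
  rw [getElem_take, getElem_drop]
  by_cases hgap : i + 2 ≤ u.length + k
  · exact getElem_lt_getElem_of_count_le_two (pairwise_contentWord v)
      (count_contentWord_le_two hv) hgap _
  · obtain ⟨rfl, hlen⟩ : k = 0 ∧ u.length = i + 1 := by simp at hi; omega
    have hu' : u = replicate i 1 ++ [2] :=
      (hcase.resolve_left (by simp; omega)).resolve_left (lt_irrefl 0)
    have hv1 : v.head? = some 1 := by
      cases v with
      | nil => simp [hu'] at hsum
      | cons p v => rcases hv p (by simp) with rfl | rfl <;> simp_all
    have hwlen : (contentWord v).length = i + 2 := by rw [hw, hlen, hu']; simp [count_replicate]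
    simpa [hwlen, hlen] using getElem_contentWord_lt_of_head?_eq_one hv1 (i := i) (by omega)

theorem YFNumber_eq_zero_iff_general (n : ℕ) (u v : List ℕ)
    (hu : IsSnakeshape u) (husum : u.sum = n)
    (hv : IsSnakeshape v) (hvsum : v.sum = n) :
    YFNumber u v = 0 ↔
      u = List.replicate (n - 2) 1 ++ [2] ∧ v.head? = some 2 := by
  rw [yfNumber_eq_zero_iff_not_exists]
  constructor
  · intro hnone
    by_contra hexc
    refine hnone (exists_isSSYFT_contentIs hu hv (husum.trans hvsum.symm) fun k hk hv2 => ?_)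
    obtain rfl : n = k + 2 := by simp [← husum, hk]
    exact hexc ⟨by simpa using hk, hv2⟩
  · rintro ⟨rfl, hv2⟩ ⟨t, ht, hc⟩
    have := count_one_le_one_of_isSSYFT_replicate_append_two ht
    rw [hc 0] at this
    cases v <;> simp_all

/-- for snakeshapes `u, v` of size `n ≥ 2`, `N_{u,v} = 0` iff
`u = (1,…,1,2)` (with `n-2` parts `1`) and the first part of `v` is `2`. -/
theorem YFNumber_eq_zero_iff (n : ℕ) (hn : 2 ≤ n) (u v : List ℕ)
    (hu : IsSnakeshape u) (husum : u.sum = n)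
    (hv : IsSnakeshape v) (hvsum : v.sum = n) :
    YFNumber u v = 0 ↔
      u = List.replicate (n - 2) 1 ++ [2] ∧ v.head? = some 2 :=
  YFNumber_eq_zero_iff_general n u v hu husum hv hvsum
end
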